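/- Define G_{s,p}(a) = E_{s,p}(p·a)/E_{s−1,p}(a) for Witt vectors a of length s (where p·a means multiplication by p in the Witt ring). Then G_{s,p}(a)·G_{s,p}(b) = G_{s,p}(a+b) for Witt vector addition. -/

import Mathlib

open PowerSeries Classical

/-- Formal exponential `exp f = Σ_n f^n / n!` of a one-variable power series. -/
noncomputable def pexp {K : Type} [Field K] (f : PowerSeries K) : PowerSeries K :=
  PowerSeries.mk fun d =>
    ∑ n ∈ Finset.range (d + 1), PowerSeries.coeff d (f ^ n) / (Nat.factorial n : K)

/-- Substitution `f(a)` of a multivariate power series `a` (with zero constant term) into a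
one-variable power series `f`. -/
noncomputable def substOne {K : Type} [Field K] {σ : Type}
    (a : MvPowerSeries σ K) (f : PowerSeries K) : MvPowerSeries σ K :=
  fun d => ∑ n ∈ Finset.range (d.sum (fun _ k => k) + 1),
    PowerSeries.coeff n f * MvPowerSeries.coeff d (a ^ n)

/-- `E_{j,p}(t) = exp (Σ_{i<j} (ζ_{p^{j-i}} - 1) t^{p^i}/p^i)`, with `ζ_{p^r} = ζ^{p^{s-r}}`. -/
noncomputable def Esingle (p s : ℕ) {K : Type} [Field K] (ζ : K) (j : ℕ) :
    PowerSeries K :=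
  pexp (∑ i ∈ Finset.range j,
    (PowerSeries.monomial (p ^ i)) ((ζ ^ p ^ (s - j + i) - 1) / ((p : K) ^ i)))

/-- `E_{n,p}(a) = Π_{i<n} E_{n-i,p}(a_i)` on the first `n` components of a Witt vector. -/
noncomputable def EW (p s : ℕ) {K : Type} [Field K] (ζ : K) {σ : Type} (n : ℕ)
    (a : WittVector p (MvPowerSeries σ K)) [Fact p.Prime] : MvPowerSeries σ K :=
  ∏ i ∈ Finset.range n, substOne (a.coeff i) (Esingle p s ζ (n - i))

/-- `G_{s,p}(a) = E_{s,p}(p·a) / E_{s-1,p}(a)`, where `p·a` is multiplication by `p` in the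
Witt ring and `E_{s-1,p}` is applied to (the first `s-1` components of) `a`. -/
noncomputable def GW (p s : ℕ) {K : Type} [Field K] (ζ : K) {σ : Type}
    (a : WittVector p (MvPowerSeries σ K)) [Fact p.Prime] : MvPowerSeries σ K :=
  EW p s ζ s (p • a) * (EW p s ζ (s - 1) a)⁻¹

/-!
Write `ζ_{p^r} = ζ ^ p ^ (s - r)` and `w_m` for the ghost components. Each factor of `E_n(a)` is
the exponential of a polynomial in one Witt component, and regrouping the resulting double sum
by `m = i + k` gives, for `n ≤ s`,
`E_n(a) = exp (∑_{m<n} (ζ_{p^{n-m}} - 1) / p^m • w_m(a))`.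
Ghost components are additive and `exp` (here `x ↦ substOne x (exp K)`) turns sums of series
without constant term into products, so `E_n(a + b) = E_n(a) E_n(b)`. Applying this to
`p • a + p • b = p • (a + b)` with `n = s` and to `a + b` with `n = s - 1` gives the
multiplicativity of `G_{s,p}`.
-/

variable {σ : Type}

theorem inv_factorial_smul_add_pow {K A : Type*} [Field K] [CharZero K] [CommRing A]
    [Algebra K A] (x y : A) (m : ℕ) :
    (m.factorial : K)⁻¹ • (x + y) ^ m = ∑ k ∈ Finset.range (m + 1),
      (k.factorial : K)⁻¹ • x ^ k * ((m - k).factorial : K)⁻¹ • y ^ (m - k) := by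
  rw [add_pow, Finset.smul_sum]
  refine Finset.sum_congr rfl fun k hk => ?_
  rw [smul_mul_smul_comm, mul_comm _ (m.choose k : A), ← nsmul_eq_mul, smul_comm,
    ← Nat.cast_smul_eq_nsmul K, smul_smul,
    Nat.cast_choose K (Nat.lt_succ_iff.mp (Finset.mem_range.mp hk))]
  congr 1
  rw [div_mul_eq_mul_div, mul_inv_cancel₀ (Nat.cast_ne_zero.mpr (Nat.factorial_ne_zero m)),
    one_div, mul_inv]

theorem MvPowerSeries.coeff_pow_eq_zero_of_degree_lt {R : Type*} [CommSemiring R]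
    {a : MvPowerSeries σ R} (ha : MvPowerSeries.constantCoeff a = 0) {n : ℕ} {d : σ →₀ ℕ}
    (hd : d.degree < n) : MvPowerSeries.coeff d (a ^ n) = 0 :=
  MvPowerSeries.coeff_of_lt_order <|
    (Nat.cast_lt.mpr hd).trans_le (MvPowerSeries.le_order_pow_of_constantCoeff_eq_zero n ha)

theorem MvPowerSeries.coeff_mul_congr {R : Type*} [CommSemiring R]
    {f f' g g' : MvPowerSeries σ R} {d : σ →₀ ℕ} (hf : ∀ e ≤ d, coeff e f = coeff e f')
    (hg : ∀ e ≤ d, coeff e g = coeff e g') :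
    coeff d (f * g) = coeff d (f' * g') := by
  rw [MvPowerSeries.coeff_mul, MvPowerSeries.coeff_mul]
  refine Finset.sum_congr rfl fun e he => ?_
  rw [Finset.HasAntidiagonal.mem_antidiagonal] at he
  rw [hf e.1 (he ▸ le_self_add), hg e.2 (he ▸ le_add_self)]

variable {K : Type} [Field K]

theorem coeff_substOne_eq_sum_range {a : MvPowerSeries σ K}
    (ha : MvPowerSeries.constantCoeff a = 0) (f : PowerSeries K) {d : σ →₀ ℕ} {N : ℕ}
    (hN : d.degree < N) :
    MvPowerSeries.coeff d (substOne a f)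
      = ∑ n ∈ Finset.range N, coeff n f * MvPowerSeries.coeff d (a ^ n) := by
  refine Finset.sum_subset (Finset.range_subset_range.mpr (by omega : d.degree + 1 ≤ N))
    fun n _ hn => ?_
  rw [MvPowerSeries.coeff_pow_eq_zero_of_degree_lt ha (by simpa using hn), mul_zero]

theorem substOne_eq_subst {a : MvPowerSeries σ K} (ha : MvPowerSeries.constantCoeff a = 0)
    (f : PowerSeries K) : substOne a f = f.subst a := by
  ext d
  rw [coeff_substOne_eq_sum_range ha f (Nat.lt_succ_self _),
    coeff_subst (HasSubst.of_constantCoeff_zero ha), finsum_eq_sum_of_support_subset]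
  · rfl
  · intro n hn
    by_contra h
    refine hn ?_
    beta_reduce
    rw [MvPowerSeries.coeff_pow_eq_zero_of_degree_lt ha (by simpa using h), smul_zero]

theorem substOne_sum_monomial {a : MvPowerSeries σ K} (ha : MvPowerSeries.constantCoeff a = 0)
    {ι : Type*} (t : Finset ι) (e : ι → ℕ) (c : ι → K) :
    substOne a (∑ i ∈ t, monomial (e i) (c i)) = ∑ i ∈ t, c i • a ^ e i := by
  rw [substOne_eq_subst ha, ← coe_substAlgHom (HasSubst.of_constantCoeff_zero ha), map_sum]
  refine Finset.sum_congr rfl fun i _ => ?_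
  have hmono : monomial (e i) (c i) = c i • X ^ e i := by
    rw [X_pow_eq, ← map_smul, smul_eq_mul, mul_one]
  rw [hmono, map_smul, map_pow, coe_substAlgHom, subst_X (HasSubst.of_constantCoeff_zero ha)]

section CharZero

variable [CharZero K]

theorem pexp_eq_subst {g : PowerSeries K} (hg : constantCoeff g = 0) :
    pexp g = (exp K).subst g := by
  ext n
  rw [pexp, coeff_mk, coeff_subst' (HasSubst.of_constantCoeff_zero' hg),
    finsum_eq_sum_of_support_subset _ (s := Finset.range (n + 1))]
  · simp [coeff_exp, div_eq_inv_mul]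
  · intro m hm
    by_contra h
    refine hm ?_
    beta_reduce
    rw [coeff_of_lt_order n ((Nat.cast_lt.mpr (by simpa using h)).trans_le
      (le_order_pow_of_constantCoeff_eq_zero m hg)), smul_zero]

theorem substOne_pexp {a : MvPowerSeries σ K} (ha : MvPowerSeries.constantCoeff a = 0)
    {g : PowerSeries K} (hg : constantCoeff g = 0) :
    substOne a (pexp g) = substOne (substOne a g) (exp K) := by
  have hag : MvPowerSeries.constantCoeff (substOne a g) = 0 := by
    rw [substOne_eq_subst ha]
    exact constantCoeff_subst_eq_zero ha g hg
  rw [pexp_eq_subst hg, substOne_eq_subst ha, substOne_eq_subst hag, substOne_eq_subst ha,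
    subst_comp_subst_apply (HasSubst.of_constantCoeff_zero' hg)
      (HasSubst.of_constantCoeff_zero ha)]

theorem coeff_substOne_exp {x : MvPowerSeries σ K} (hx : MvPowerSeries.constantCoeff x = 0)
    {d : σ →₀ ℕ} {N : ℕ} (hN : d.degree < N) :
    MvPowerSeries.coeff d (substOne x (exp K))
      = MvPowerSeries.coeff d (∑ n ∈ Finset.range N, (n.factorial : K)⁻¹ • x ^ n) := by
  rw [coeff_substOne_eq_sum_range hx _ hN, map_sum]
  simp [coeff_exp]

theorem substOne_exp_add {x y : MvPowerSeries σ K} (hx : MvPowerSeries.constantCoeff x = 0)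
    (hy : MvPowerSeries.constantCoeff y = 0) :
    substOne (x + y) (exp K) = substOne x (exp K) * substOne y (exp K) := by
  ext d
  obtain ⟨N, hN⟩ : ∃ N, d.degree < N := ⟨_, lt_add_one _⟩
  let term (i j : ℕ) : MvPowerSeries σ K :=
    (i.factorial : K)⁻¹ • x ^ i * (j.factorial : K)⁻¹ • y ^ j
  have high_term (i j : ℕ) (hij : N ≤ i + j) : MvPowerSeries.coeff d (term i j) = 0 := by
    refine MvPowerSeries.coeff_of_lt_order ?_
    calc (d.degree : ℕ∞) < i + j := by exact_mod_cast hN.trans_le hij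
      _ ≤ _ := add_le_add (MvPowerSeries.le_order_pow_of_constantCoeff_eq_zero i hx)
            (MvPowerSeries.le_order_pow_of_constantCoeff_eq_zero j hy)
      _ ≤ _ := add_le_add MvPowerSeries.le_order_smul MvPowerSeries.le_order_smul
      _ ≤ _ := MvPowerSeries.le_order_mul
  calc MvPowerSeries.coeff d (substOne (x + y) (exp K))
      = MvPowerSeries.coeff d (∑ m ∈ Finset.range N, ∑ k ∈ Finset.range (m + 1),
          term k (m - k)) := by
        rw [coeff_substOne_exp (by simp [hx, hy]) hN]
        simp only [term, inv_factorial_smul_add_pow]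
    _ = MvPowerSeries.coeff d (∑ i ∈ Finset.range N, ∑ j ∈ Finset.range (N - i),
          term i j) := by
        rw [Finset.sum_range_diag_flip]
    _ = MvPowerSeries.coeff d (∑ i ∈ Finset.range N, ∑ j ∈ Finset.range N, term i j) := by
        simp only [map_sum]
        refine Finset.sum_congr rfl fun i hi => Finset.sum_subset
          (Finset.range_subset_range.mpr (Nat.sub_le N i)) fun j _ hj => high_term i j ?_
        simp only [Finset.mem_range] at hj
        omega
    _ = MvPowerSeries.coeff d (substOne x (exp K) * substOne y (exp K)) := by
        rw [← Finset.sum_mul_sum]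
        have hlow {e} (he : e ≤ d) : e.degree < N := (Finsupp.degree_mono he).trans_lt hN
        exact MvPowerSeries.coeff_mul_congr (fun e he => (coeff_substOne_exp hx (hlow he)).symm)
          (fun e he => (coeff_substOne_exp hy (hlow he)).symm)

theorem substOne_exp_sum {ι : Type*} (t : Finset ι) {x : ι → MvPowerSeries σ K}
    (hx : ∀ i ∈ t, MvPowerSeries.constantCoeff (x i) = 0) :
    substOne (∑ i ∈ t, x i) (exp K) = ∏ i ∈ t, substOne (x i) (exp K) := by
  induction t using Finset.induction_on with
  | empty =>
    rw [Finset.sum_empty, Finset.prod_empty, substOne_eq_subst (map_zero _),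
      subst_zero_eq_C_constantCoeff]
    simp
  | insert i t hi ih =>
    rw [Finset.forall_mem_insert] at hx
    rw [Finset.sum_insert hi, Finset.prod_insert hi,
      substOne_exp_add hx.1 (by rw [map_sum]; exact Finset.sum_eq_zero hx.2), ih hx.2]

end CharZero

section WittVector

variable {p : ℕ} [Fact p.Prime]

theorem WittVector.map_constantCoeff_eq_zero_iff {a : WittVector p (MvPowerSeries σ K)} :
    WittVector.map MvPowerSeries.constantCoeff a = 0
      ↔ ∀ i, MvPowerSeries.constantCoeff (a.coeff i) = 0 := by
  simp [WittVector.ext_iff, WittVector.map_coeff]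

variable (p) (s : ℕ) (ζ : K)

noncomputable def logEW (n : ℕ) (a : WittVector p (MvPowerSeries σ K)) : MvPowerSeries σ K :=
  ∑ m ∈ Finset.range n,
    ((ζ ^ p ^ (s - n + m) - 1) / (p : K) ^ m) • WittVector.ghostComponent m a

variable {p s ζ}

theorem logEW_add (n : ℕ) (a b : WittVector p (MvPowerSeries σ K)) :
    logEW p s ζ n (a + b) = logEW p s ζ n a + logEW p s ζ n b := by
  simp only [logEW, map_add, smul_add, Finset.sum_add_distrib]

theorem constantCoeff_logEW (n : ℕ) {a : WittVector p (MvPowerSeries σ K)}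
    (ha : WittVector.map MvPowerSeries.constantCoeff a = 0) :
    MvPowerSeries.constantCoeff (logEW p s ζ n a) = 0 := by
  simp [logEW, WittVector.ghostComponent_apply, aeval_wittPolynomial,
    WittVector.map_constantCoeff_eq_zero_iff.mp ha,
    (Fact.out : p.Prime).ne_zero]

variable [CharZero K]

theorem logEW_eq_sum_coeff {n : ℕ} (hn : n ≤ s) (a : WittVector p (MvPowerSeries σ K)) :
    logEW p s ζ n a = ∑ i ∈ Finset.range n, ∑ k ∈ Finset.range (n - i),
      ((ζ ^ p ^ (s - (n - i) + k) - 1) / (p : K) ^ k) • a.coeff i ^ p ^ k := by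
  have hp : (p : K) ≠ 0 := Nat.cast_ne_zero.mpr (Fact.out : p.Prime).ne_zero
  have hterm {m i : ℕ} (hm : m < n) (hi : i ≤ m) :
      ((ζ ^ p ^ (s - n + m) - 1) / (p : K) ^ m) •
          ((p : MvPowerSeries σ K) ^ i * a.coeff i ^ p ^ (m - i))
        = ((ζ ^ p ^ (s - (n - i) + (m - i)) - 1) / (p : K) ^ (m - i)) •
          a.coeff i ^ p ^ (m - i) := by
    rw [show s - (n - i) + (m - i) = s - n + m by omega,
      ← map_natCast (MvPowerSeries.C (σ := σ)), ← map_pow, ← MvPowerSeries.smul_eq_C_mul,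
      smul_smul, ← pow_sub_mul_pow (p : K) hi]
    field_simp
  simp only [logEW, WittVector.ghostComponent_apply, aeval_wittPolynomial, Finset.smul_sum]
  rw [← Finset.sum_range_diag_flip]
  exact Finset.sum_congr rfl fun m hm => Finset.sum_congr rfl fun i hi =>
    hterm (Finset.mem_range.mp hm) (Nat.lt_succ_iff.mp (Finset.mem_range.mp hi))

theorem EW_eq_substOne_exp_logEW {n : ℕ} (hn : n ≤ s) {a : WittVector p (MvPowerSeries σ K)}
    (ha : WittVector.map MvPowerSeries.constantCoeff a = 0) :
    EW p s ζ n a = substOne (logEW p s ζ n a) (exp K) := by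
  have hp : p ≠ 0 := (Fact.out : p.Prime).ne_zero
  rw [WittVector.map_constantCoeff_eq_zero_iff] at ha
  rw [logEW_eq_sum_coeff hn, substOne_exp_sum _ fun i _ => by simp [ha i, hp], EW]
  refine Finset.prod_congr rfl fun i _ => ?_
  have hE : constantCoeff (∑ k ∈ Finset.range (n - i),
      monomial (p ^ k) ((ζ ^ p ^ (s - (n - i) + k) - 1) / (p : K) ^ k)) = 0 := by
    rw [map_sum]
    exact Finset.sum_eq_zero fun k _ => by
      rw [← coeff_zero_eq_constantCoeff_apply, coeff_monomial, if_neg (pow_ne_zero k hp).symm]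
  rw [Esingle, substOne_pexp (ha i) hE, substOne_sum_monomial (ha i)]

theorem EW_add {n : ℕ} (hn : n ≤ s) {a b : WittVector p (MvPowerSeries σ K)}
    (ha : WittVector.map MvPowerSeries.constantCoeff a = 0)
    (hb : WittVector.map MvPowerSeries.constantCoeff b = 0) :
    EW p s ζ n (a + b) = EW p s ζ n a * EW p s ζ n b := by
  rw [EW_eq_substOne_exp_logEW hn ha, EW_eq_substOne_exp_logEW hn hb,
    EW_eq_substOne_exp_logEW hn (by rw [map_add, ha, hb, add_zero]), logEW_add,
    substOne_exp_add (constantCoeff_logEW n ha) (constantCoeff_logEW n hb)]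

end WittVector

theorem stmt_7_general (p s : ℕ) [Fact p.Prime] (K : Type) [Field K] [CharZero K]
    (ζ : K) :
    ∀ a b : WittVector p (MvPowerSeries (Fin 2 × ℕ) K),
      a = WittVector.mk p (fun i => MvPowerSeries.X (0, i)) →
      b = WittVector.mk p (fun i => MvPowerSeries.X (1, i)) →
      GW p s ζ a * GW p s ζ b = GW p s ζ (a + b) := by
  rintro a b rfl rfl
  have hX (j : Fin 2) : WittVector.map MvPowerSeries.constantCoeff
      (WittVector.mk p fun i => (MvPowerSeries.X (j, i) : MvPowerSeries _ K)) = 0 :=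
    WittVector.map_constantCoeff_eq_zero_iff.mpr fun _ => MvPowerSeries.constantCoeff_X _
  have hpX (j : Fin 2) : WittVector.map MvPowerSeries.constantCoeff
      (p • WittVector.mk p fun i => (MvPowerSeries.X (j, i) : MvPowerSeries _ K)) = 0 := by
    rw [map_nsmul, hX, smul_zero]
  rw [GW, GW, GW, smul_add, EW_add le_rfl (hpX 0) (hpX 1), EW_add (Nat.sub_le s 1) (hX 0) (hX 1),
    MvPowerSeries.mul_inv_rev]
  ring

/-- `G_{s,p}(a) · G_{s,p}(b) = G_{s,p}(a + b)` for Witt vector addition, as an identity of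
formal power series in the (independent variable) entries of `a` and `b`. -/
theorem stmt_7 (p s : ℕ) [Fact p.Prime] (hs : 2 ≤ s) (K : Type) [Field K] [CharZero K]
    (ζ : K) (hζ : IsPrimitiveRoot ζ (p ^ s)) :
    ∀ a b : WittVector p (MvPowerSeries (Fin 2 × ℕ) K),
      a = WittVector.mk p (fun i => MvPowerSeries.X (0, i)) →
      b = WittVector.mk p (fun i => MvPowerSeries.X (1, i)) →
      GW p s ζ a * GW p s ζ b = GW p s ζ (a + b) :=
  stmt_7_general p s K ζ
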